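/- Let G be a DAG with topological order v_1,...,v_n and G_i = G[{v_1,...,v_i}]. A frontier antichain A of G_{i-1} is a frontier antichain of G_i if and only if A is not dominated in G_i by any frontier antichain of G_i containing v_i. -/

import Mathlib

/-!
Suppose `A` is frontier in `G_i` but some antichain `B ≠ A` of `G_{i+1}` dominates it. A frontier
antichain `C` of `G_{i+1}` dominating `B` dominates `A` as well, so by hypothesis `C` avoids `v_i`.
Then `C` lies in `G_i`, and since paths only move forward in the topological order, `C` is an
antichain of `G_i` dominating `A` there; hence `C = A`. Now `A` and `B` dominate each other, which
forces `B = A` because reachability is antisymmetric in a DAG.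
-/

open Relation

/-- A directed graph (edge relation `E`) is acyclic. -/
def Acyclic {V : Type*} (E : V → V → Prop) : Prop := ∀ v, ¬ TransGen E v v

/-- `A` is an antichain: its vertices are pairwise non-reachable
(reachability = reflexive-transitive closure of `E`). -/
def IsAC {V : Type*} (E : V → V → Prop) (A : Finset V) : Prop :=
  ∀ a ∈ A, ∀ b ∈ A, a ≠ b → ¬ ReflTransGen E a b

/-- `B` dominates `A`: same size, and every vertex of `B` is reachable from some vertex of `A`. -/
def Dom {V : Type*} (E : V → V → Prop) (B A : Finset V) : Prop :=
  B.card = A.card ∧ ∀ b ∈ B, ∃ a ∈ A, ReflTransGen E a b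

/-- A frontier antichain: an antichain not dominated by any other antichain. -/
def Frontier {V : Type*} (E : V → V → Prop) (A : Finset V) : Prop :=
  IsAC E A ∧ ∀ B : Finset V, IsAC E B → B ≠ A → ¬ Dom E B A

/-- The identity order on `Fin n` is a topological order for `E`. -/
def Topo {n : ℕ} (E : Fin n → Fin n → Prop) : Prop := ∀ u v, E u v → (u : ℕ) < (v : ℕ)

/-- The edge relation of the induced subgraph `G_i` on the first `i` vertices. -/
def Erest {n : ℕ} (E : Fin n → Fin n → Prop) (i : ℕ) (u v : Fin n) : Prop :=
  E u v ∧ (u : ℕ) < i ∧ (v : ℕ) < i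

/-- `A` is a frontier antichain of the induced subgraph `G_i` on the first `i` vertices. -/
def FrontierIn {n : ℕ} (E : Fin n → Fin n → Prop) (i : ℕ) (A : Finset (Fin n)) : Prop :=
  (∀ a ∈ A, (a : ℕ) < i) ∧ IsAC (Erest E i) A ∧
  ∀ B : Finset (Fin n), (∀ b ∈ B, (b : ℕ) < i) → IsAC (Erest E i) B → B ≠ A →
    ¬ Dom (Erest E i) B A

/-- The support `S_i`: union of all frontier antichains of `G_i`. -/
def SupportIn {n : ℕ} (E : Fin n → Fin n → Prop) (i : ℕ) : Set (Fin n) :=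
  {v | ∃ A : Finset (Fin n), FrontierIn E i A ∧ v ∈ A}

section Antichains

variable {V : Type*} {r : V → V → Prop}

theorem Acyclic.reflTransGen_antisymm (hr : Acyclic r) {a b : V}
    (hab : ReflTransGen r a b) (hba : ReflTransGen r b a) : a = b := by
  rcases reflTransGen_iff_eq_or_transGen.mp hab with rfl | hab
  · rfl
  · exact absurd (hab.trans_left hba) (hr a)

theorem Dom.refl (A : Finset V) : Dom r A A :=
  ⟨rfl, fun a ha => ⟨a, ha, .refl⟩⟩

theorem Dom.trans {A B C : Finset V} (hCB : Dom r C B) (hBA : Dom r B A) : Dom r C A := by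
  refine ⟨hCB.1.trans hBA.1, fun c hc => ?_⟩
  obtain ⟨b, hb, hbc⟩ := hCB.2 c hc
  obtain ⟨a, ha, hab⟩ := hBA.2 b hb
  exact ⟨a, ha, hab.trans hbc⟩

theorem Dom.antisymm (hr : Acyclic r) {A B : Finset V} (hB : IsAC r B)
    (hBA : Dom r B A) (hAB : Dom r A B) : B = A := by
  refine Finset.eq_of_subset_of_card_le (fun b hb => ?_) hAB.1.le
  obtain ⟨a, ha, hab⟩ := hBA.2 b hb
  obtain ⟨b', hb', hb'a⟩ := hAB.2 a ha
  obtain rfl : b' = b := by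
    by_contra hne
    exact hB b' hb' b hb hne (hb'a.trans hab)
  rwa [← hr.reflTransGen_antisymm hab hb'a]

theorem Acyclic.wellFounded_strictDom [Finite V] (hr : Acyclic r) :
    WellFounded fun B A : Finset V => IsAC r B ∧ Dom r B A ∧ B ≠ A := by
  have : IsTrans (Finset V) fun B A => IsAC r B ∧ Dom r B A ∧ B ≠ A := by
    refine ⟨fun C B A ⟨hC, hCB, _⟩ ⟨hB, hBA, hBA_ne⟩ => ⟨hC, hCB.trans hBA, ?_⟩⟩
    rintro rfl
    exact hBA_ne (Dom.antisymm hr hB hBA hCB)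
  have : Std.Irrefl fun B A : Finset V => IsAC r B ∧ Dom r B A ∧ B ≠ A :=
    ⟨fun A h => h.2.2 rfl⟩
  exact Finite.wellFounded_of_trans_of_irrefl _

theorem Acyclic.exists_frontier_dom [Finite V] (hr : Acyclic r) {A : Finset V}
    (hA : IsAC r A) : ∃ C, Frontier r C ∧ Dom r C A := by
  induction A using hr.wellFounded_strictDom.induction with
  | _ A ih =>
  by_cases hF : Frontier r A
  · exact ⟨A, hF, .refl A⟩
  · obtain ⟨B, hB, hBA_ne, hBA⟩ : ∃ B, IsAC r B ∧ B ≠ A ∧ Dom r B A := by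
      simpa [Frontier, hA] using hF
    obtain ⟨C, hC, hCB⟩ := ih B ⟨hB, hBA, hBA_ne⟩ hB
    exact ⟨C, hC, hCB.trans hBA⟩

end Antichains

section InducedPrefix

variable {n : ℕ} {E : Fin n → Fin n → Prop}

theorem Topo.acyclic_erest (hE : Topo E) (j : ℕ) : Acyclic (Erest E j) := fun v h =>
  lt_irrefl v (transGen_minimal (r' := fun u w : Fin n => u < w) (fun u w e => hE u w e.1) v v h)

theorem Dom.lt_of_erest {j : ℕ} {A B : Finset (Fin n)} (hBA : Dom (Erest E j) B A)
    (hAj : ∀ a ∈ A, (a : ℕ) < j) : ∀ b ∈ B, (b : ℕ) < j := fun b hb => by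
  obtain ⟨a, ha, hab⟩ := hBA.2 b hb
  rcases hab.cases_tail with rfl | ⟨c, -, e⟩
  · exact hAj b ha
  · exact e.2.2

/-- Vertices increase along a path, so a path ending in `G_k` stays inside `G_k`. -/
theorem Topo.reflTransGen_erest_of_lt (hE : Topo E) {j k : ℕ} {a b : Fin n}
    (h : ReflTransGen (Erest E j) a b) (hb : (b : ℕ) < k) : ReflTransGen (Erest E k) a b := by
  induction h with
  | refl => exact .refl
  | @tail c d _ e ih =>
    have hc : (c : ℕ) < k := (hE c d e.1).trans hb
    exact (ih hc).tail ⟨e.1, hc, hb⟩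

theorem Topo.isAC_erest_of_lt (hE : Topo E) {j k : ℕ} {A : Finset (Fin n)}
    (hA : IsAC (Erest E j) A) (hAj : ∀ a ∈ A, (a : ℕ) < j) : IsAC (Erest E k) A :=
  fun a ha b hb hab h => hA a ha b hb hab (hE.reflTransGen_erest_of_lt h (hAj b hb))

theorem Topo.dom_erest_of_lt (hE : Topo E) {j k : ℕ} {A B : Finset (Fin n)}
    (hBA : Dom (Erest E j) B A) (hBk : ∀ b ∈ B, (b : ℕ) < k) : Dom (Erest E k) B A := by
  refine ⟨hBA.1, fun b hb => ?_⟩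
  obtain ⟨a, ha, hab⟩ := hBA.2 b hb
  exact ⟨a, ha, hE.reflTransGen_erest_of_lt hab (hBk b hb)⟩

theorem frontierIn_of_frontier {j : ℕ} {A : Finset (Fin n)} (hAj : ∀ a ∈ A, (a : ℕ) < j)
    (hA : Frontier (Erest E j) A) : FrontierIn E j A :=
  ⟨hAj, hA.1, fun B _ hB hBA => hA.2 B hB hBA⟩

end InducedPrefix

/-- a frontier antichain of `G_i` remains frontier in `G_{i+1}` iff it is
not dominated (in `G_{i+1}`) by any frontier antichain of `G_{i+1}` containing `v_i`. -/
theorem type2_characterization {n : ℕ} (E : Fin n → Fin n → Prop) (hE : Topo E)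
    (i : ℕ) (hi : i < n) (A : Finset (Fin n)) (hA : FrontierIn E i A) :
    (FrontierIn E (i + 1) A ↔
      ∀ B : Finset (Fin n), FrontierIn E (i + 1) B → (⟨i, hi⟩ : Fin n) ∈ B →
        ¬ Dom (Erest E (i + 1)) B A) := by
  constructor
  · intro hA' B hB hvB
    have hvA : (⟨i, hi⟩ : Fin n) ∉ A := fun hv => lt_irrefl i (hA.1 _ hv)
    exact hA'.2.2 B hB.1 hB.2.1 (ne_of_mem_of_not_mem' hvB hvA)
  refine fun hv => ⟨fun a ha => (hA.1 a ha).trans i.lt_succ_self,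
    hE.isAC_erest_of_lt hA.2.1 hA.1, fun B hBi hB hBA_ne hBA => ?_⟩
  obtain ⟨C, hC, hCB⟩ := (hE.acyclic_erest (i + 1)).exists_frontier_dom hB
  have hCA := hCB.trans hBA
  have hCi : ∀ c ∈ C, (c : ℕ) < i + 1 := hCB.lt_of_erest hBi
  have hvC : (⟨i, hi⟩ : Fin n) ∉ C := fun hvC => hv C (frontierIn_of_frontier hCi hC) hvC hCA
  have hCi' : ∀ c ∈ C, (c : ℕ) < i := fun c hc =>
    (Nat.lt_succ_iff_lt_or_eq.mp (hCi c hc)).resolve_right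
      fun h => hvC ((Fin.ext h : c = ⟨i, hi⟩) ▸ hc)
  obtain rfl : C = A := by
    by_contra hCA_ne
    exact hA.2.2 C hCi' (hE.isAC_erest_of_lt hC.1 hCi) hCA_ne (hE.dom_erest_of_lt hCA hCi')
  exact hBA_ne (Dom.antisymm (hE.acyclic_erest _) hB hBA hCB)
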